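/- Let P and Q be orthogonal projections on a Hilbert space H such that the operators P − Q + 1 and P − Q − 1 are both Fredholm. Then the pairs of subspaces (Ran P, Ker Q) and (Ran Q, Ker P) are Fredholm pairs, i.e. each pair (U,V) satisfies dim(U ∩ V) < ∞, dim(U⊥ ∩ V⊥) < ∞, and U + V is closed. -/
import Mathlib

noncomputable section

open scoped InnerProductSpace
open ContinuousLinearMap

variable (H : Type) [NormedAddCommGroup H] [InnerProductSpace ℂ H] [CompleteSpace H]

/-- A bounded operator `T` on `H` is Fredholm: finite-dimensional kernel,
finite-dimensional cokernel, and closed range. -/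
def IsFredholmOp (T : H →L[ℂ] H) : Prop :=
  FiniteDimensional ℂ ↥(LinearMap.ker (T : H →ₗ[ℂ] H)) ∧
  FiniteDimensional ℂ (H ⧸ LinearMap.range (T : H →ₗ[ℂ] H)) ∧
  IsClosed ((LinearMap.range (T : H →ₗ[ℂ] H) : Submodule ℂ H) : Set H)

/-- A pair `(U,V)` of closed subspaces is a Fredholm pair:
`dim (U ∩ V) < ∞`, `dim (U⊥ ∩ V⊥) < ∞`, and `U + V` is closed. -/
def FredholmPairSub (U V : Submodule ℂ H) : Prop :=
  FiniteDimensional ℂ ↥(U ⊓ V) ∧ FiniteDimensional ℂ ↥(Uᗮ ⊓ Vᗮ) ∧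
  IsClosed ((U ⊔ V : Submodule ℂ H) : Set H)

variable {H}

/-- moving a selfadjoint operator across the inner product -/
lemma sa_inner_move {P : H →L[ℂ] H} (hP₂ : IsSelfAdjoint P) (x y : H) :
    ⟪x, P y⟫_ℂ = ⟪P x, y⟫_ℂ := by
  conv_rhs => rw [← hP₂.adjoint_eq]
  rw [ContinuousLinearMap.adjoint_inner_left]

lemma idem_apply {P : H →L[ℂ] H} (hP₁ : IsIdempotentElem P) (x : H) :
    P (P x) = P x := by
  have := congrArg (fun T : H →L[ℂ] H => T x) hP₁
  simpa [ContinuousLinearMap.mul_apply] using this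

/-- For a selfadjoint idempotent, `‖P x‖ ≤ ‖x‖`. -/
lemma norm_proj_le {P : H →L[ℂ] H} (hP₁ : IsIdempotentElem P) (hP₂ : IsSelfAdjoint P)
    (x : H) : ‖P x‖ ≤ ‖x‖ := by
  have h1 : ⟪P x, P x⟫_ℂ = ⟪P x, x⟫_ℂ := by
    rw [sa_inner_move hP₂ (P x) x, idem_apply hP₁]
  have h2 : (‖P x‖ : ℝ) ^ 2 = RCLike.re ⟪P x, x⟫_ℂ := by
    rw [← h1, inner_self_eq_norm_sq]
  have h3 : RCLike.re ⟪P x, x⟫_ℂ ≤ ‖P x‖ * ‖x‖ := by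
    calc RCLike.re ⟪P x, x⟫_ℂ ≤ ‖⟪P x, x⟫_ℂ‖ := RCLike.re_le_norm _
      _ ≤ ‖P x‖ * ‖x‖ := norm_inner_le_norm _ _
  nlinarith [norm_nonneg (P x), norm_nonneg x]

/-- Key kernel identity: `Ker (P - Q + 1) = Ran Q ⊓ Ker P`. -/
lemma ker_id (P Q : H →L[ℂ] H)
    (hP₁ : IsIdempotentElem P) (hP₂ : IsSelfAdjoint P)
    (hQ₁ : IsIdempotentElem Q) (hQ₂ : IsSelfAdjoint Q) :
    LinearMap.ker ((P - Q + 1 : H →L[ℂ] H) : H →ₗ[ℂ] H) =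
      LinearMap.range (Q : H →ₗ[ℂ] H) ⊓ LinearMap.ker (P : H →ₗ[ℂ] H) := by
  ext x
  simp only [LinearMap.mem_ker, Submodule.mem_inf, LinearMap.mem_range,
    ContinuousLinearMap.coe_coe, ContinuousLinearMap.add_apply,
    ContinuousLinearMap.sub_apply, ContinuousLinearMap.one_apply]
  constructor
  · intro hx
    -- P x - Q x + x = 0, so Q x = P x + x
    have hQx : Q x = P x + x := by
      have h := hx
      rw [sub_add_eq_add_sub, sub_eq_zero] at h
      exact h.symm
    have hpp : ⟪P x, P x⟫_ℂ = ⟪P x, x⟫_ℂ := by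
      rw [sa_inner_move hP₂ (P x) x, idem_apply hP₁]
    have h1 : ⟪Q x, Q x⟫_ℂ = ⟪P x, P x⟫_ℂ + ⟪x, x⟫_ℂ := by
      calc ⟪Q x, Q x⟫_ℂ = ⟪Q (Q x), x⟫_ℂ := sa_inner_move hQ₂ (Q x) x
        _ = ⟪Q x, x⟫_ℂ := by rw [idem_apply hQ₁]
        _ = ⟪P x, x⟫_ℂ + ⟪x, x⟫_ℂ := by rw [hQx, inner_add_left]
        _ = ⟪P x, P x⟫_ℂ + ⟪x, x⟫_ℂ := by rw [hpp]
    have h1' : ‖Q x‖ ^ 2 = ‖P x‖ ^ 2 + ‖x‖ ^ 2 := by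
      rw [inner_self_eq_norm_sq_to_K, inner_self_eq_norm_sq_to_K,
        inner_self_eq_norm_sq_to_K] at h1
      exact_mod_cast h1
    have h2 : ‖Q x‖ ≤ ‖x‖ := norm_proj_le hQ₁ hQ₂ x
    have hPx : P x = 0 := by
      have : ‖P x‖ = 0 := by nlinarith [norm_nonneg (P x), norm_nonneg (Q x), norm_nonneg x]
      simpa using this
    have hQx' : Q x = x := by rw [hQx, hPx, zero_add]
    exact ⟨⟨x, hQx'⟩, hPx⟩
  · rintro ⟨⟨y, hy⟩, hPx⟩
    have hQx : Q x = x := by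
      rw [← hy, idem_apply hQ₁, hy]
    rw [hPx, hQx]
    abel

/-- `Ker P = Ran (1 - P)` for an idempotent. -/
lemma ker_eq_range_one_sub (P : H →L[ℂ] H) (hP₁ : IsIdempotentElem P) :
    LinearMap.ker (P : H →ₗ[ℂ] H) = LinearMap.range ((1 - P : H →L[ℂ] H) : H →ₗ[ℂ] H) := by
  ext x
  simp only [LinearMap.mem_ker, LinearMap.mem_range, ContinuousLinearMap.coe_coe,
    ContinuousLinearMap.sub_apply, ContinuousLinearMap.one_apply]
  constructor
  · intro hx; exact ⟨x, by rw [hx, sub_zero]⟩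
  · rintro ⟨y, hy⟩
    rw [← hy]
    simp [map_sub, idem_apply hP₁]

/-- `Ran P = Ker (1 - P)` for an idempotent. -/
lemma range_eq_ker_one_sub (P : H →L[ℂ] H) (hP₁ : IsIdempotentElem P) :
    LinearMap.range (P : H →ₗ[ℂ] H) = LinearMap.ker ((1 - P : H →L[ℂ] H) : H →ₗ[ℂ] H) := by
  ext x
  simp only [LinearMap.mem_ker, LinearMap.mem_range, ContinuousLinearMap.coe_coe,
    ContinuousLinearMap.sub_apply, ContinuousLinearMap.one_apply]
  constructor
  · rintro ⟨y, hy⟩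
    rw [← hy, idem_apply hP₁, sub_self]
  · intro hx
    exact ⟨x, (sub_eq_zero.mp hx).symm⟩

lemma one_sub_idem {P : H →L[ℂ] H} (hP₁ : IsIdempotentElem P) :
    IsIdempotentElem (1 - P) := hP₁.one_sub

/-- `(Ran P)ᗮ = Ker P` for an orthogonal projection. -/
lemma range_orth (P : H →L[ℂ] H) (hP₁ : IsIdempotentElem P) (hP₂ : IsSelfAdjoint P) :
    (LinearMap.range (P : H →ₗ[ℂ] H))ᗮ = LinearMap.ker (P : H →ₗ[ℂ] H) := by
  ext x
  rw [Submodule.mem_orthogonal, LinearMap.mem_ker]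
  simp only [ContinuousLinearMap.coe_coe]
  constructor
  · intro hx
    have h0 : ⟪P x, x⟫_ℂ = 0 := hx (P x) ⟨x, rfl⟩
    have : ⟪P x, P x⟫_ℂ = 0 := by
      calc ⟪P x, P x⟫_ℂ = ⟪P (P x), x⟫_ℂ := sa_inner_move hP₂ (P x) x
        _ = ⟪P x, x⟫_ℂ := by rw [idem_apply hP₁]
        _ = 0 := hx (P x) ⟨x, rfl⟩
    exact inner_self_eq_zero.mp this
  · intro hx u hu
    obtain ⟨y, hy⟩ := hu
    simp only [ContinuousLinearMap.coe_coe] at hy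
    rw [← hy, ← sa_inner_move hP₂, hx, inner_zero_right]

/-- `(Ker P)ᗮ = Ran P` for an orthogonal projection. -/
lemma ker_orth (P : H →L[ℂ] H) (hP₁ : IsIdempotentElem P) (hP₂ : IsSelfAdjoint P) :
    (LinearMap.ker (P : H →ₗ[ℂ] H))ᗮ = LinearMap.range (P : H →ₗ[ℂ] H) := by
  rw [ker_eq_range_one_sub P hP₁,
    range_orth (1 - P) hP₁.one_sub ((IsSelfAdjoint.one _).sub hP₂)]
  -- goal : ker (1 - P) = range P
  ext x
  simp only [LinearMap.mem_ker, LinearMap.mem_range, ContinuousLinearMap.coe_coe,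
    ContinuousLinearMap.sub_apply, ContinuousLinearMap.one_apply]
  constructor
  · intro hx
    exact ⟨x, (sub_eq_zero.mp hx).symm⟩
  · rintro ⟨y, hy⟩
    rw [← hy, idem_apply hP₁, sub_self]

/-- A submodule containing a closed finite-codimensional submodule is closed. -/
lemma closed_of_le {W S : Submodule ℂ H} (hWS : W ≤ S) (hW : IsClosed (W : Set H))
    (hfin : FiniteDimensional ℂ (H ⧸ W)) : IsClosed (S : Set H) := by
  haveI := hfin
  haveI : IsClosed (W : Set H) := hW
  have hcont : Continuous W.mkQ := continuous_quot_mk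
  have himg : IsClosed ((S.map W.mkQ : Submodule ℂ (H ⧸ W)) : Set (H ⧸ W)) :=
    Submodule.closed_of_finiteDimensional _
  have hS : S = (S.map W.mkQ).comap W.mkQ := by
    rw [Submodule.comap_map_mkQ, sup_eq_right.mpr hWS]
  rw [hS]
  exact himg.preimage hcont

variable (H)

theorem fredholm_pairs_of_projections (P Q : H →L[ℂ] H)
    (hP₁ : IsIdempotentElem P) (hP₂ : IsSelfAdjoint P)
    (hQ₁ : IsIdempotentElem Q) (hQ₂ : IsSelfAdjoint Q)
    (hplus : IsFredholmOp H (P - Q + 1)) (hminus : IsFredholmOp H (P - Q - 1)) :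
    FredholmPairSub H (LinearMap.range (P : H →ₗ[ℂ] H)) (LinearMap.ker (Q : H →ₗ[ℂ] H)) ∧
    FredholmPairSub H (LinearMap.range (Q : H →ₗ[ℂ] H)) (LinearMap.ker (P : H →ₗ[ℂ] H)) := by
  obtain ⟨hpk, hpc, hpr⟩ := hplus
  obtain ⟨hmk, hmc, hmr⟩ := hminus
  -- kernels of the two operators agree with the intersections
  have kerPlus : LinearMap.ker ((P - Q + 1 : H →L[ℂ] H) : H →ₗ[ℂ] H) =
      LinearMap.range (Q : H →ₗ[ℂ] H) ⊓ LinearMap.ker (P : H →ₗ[ℂ] H) :=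
    ker_id P Q hP₁ hP₂ hQ₁ hQ₂
  have hker_neg : LinearMap.ker ((P - Q - 1 : H →L[ℂ] H) : H →ₗ[ℂ] H) =
      LinearMap.ker ((Q - P + 1 : H →L[ℂ] H) : H →ₗ[ℂ] H) := by
    ext x
    simp only [LinearMap.mem_ker, ContinuousLinearMap.coe_coe,
      ContinuousLinearMap.add_apply, ContinuousLinearMap.sub_apply,
      ContinuousLinearMap.one_apply]
    constructor
    · intro h
      have e : Q x - P x + x = -(P x - Q x - x) := by abel
      rw [e, h, neg_zero]
    · intro h
      have e : P x - Q x - x = -(Q x - P x + x) := by abel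
      rw [e, h, neg_zero]
  have kerMinus : LinearMap.ker ((P - Q - 1 : H →L[ℂ] H) : H →ₗ[ℂ] H) =
      LinearMap.range (P : H →ₗ[ℂ] H) ⊓ LinearMap.ker (Q : H →ₗ[ℂ] H) := by
    rw [hker_neg]; exact ker_id Q P hQ₁ hQ₂ hP₁ hP₂
  -- range inclusions
  have hsub1 : LinearMap.range ((P - Q + 1 : H →L[ℂ] H) : H →ₗ[ℂ] H) ≤
      LinearMap.range (P : H →ₗ[ℂ] H) ⊔ LinearMap.ker (Q : H →ₗ[ℂ] H) := by
    rintro _ ⟨x, rfl⟩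
    have heq : ((P - Q + 1 : H →L[ℂ] H) : H →ₗ[ℂ] H) x = P x + (x - Q x) := by
      simp only [ContinuousLinearMap.coe_coe, ContinuousLinearMap.add_apply,
        ContinuousLinearMap.sub_apply, ContinuousLinearMap.one_apply]
      abel
    rw [heq]
    refine Submodule.add_mem_sup ⟨x, rfl⟩ ?_
    simp only [LinearMap.mem_ker, ContinuousLinearMap.coe_coe, map_sub]
    rw [idem_apply hQ₁, sub_self]
  have hsub2 : LinearMap.range ((P - Q - 1 : H →L[ℂ] H) : H →ₗ[ℂ] H) ≤
      LinearMap.range (Q : H →ₗ[ℂ] H) ⊔ LinearMap.ker (P : H →ₗ[ℂ] H) := by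
    rintro _ ⟨x, rfl⟩
    have heq : ((P - Q - 1 : H →L[ℂ] H) : H →ₗ[ℂ] H) x = Q (-x) + (P x - x) := by
      simp only [ContinuousLinearMap.coe_coe, ContinuousLinearMap.sub_apply,
        ContinuousLinearMap.one_apply, map_neg]
      abel
    rw [heq]
    refine Submodule.add_mem_sup ⟨-x, rfl⟩ ?_
    simp only [LinearMap.mem_ker, ContinuousLinearMap.coe_coe, map_sub]
    rw [idem_apply hP₁, sub_self]
  constructor
  · refine ⟨?_, ?_, ?_⟩
    · rw [← kerMinus]; exact hmk
    · rw [range_orth P hP₁ hP₂, ker_orth Q hQ₁ hQ₂, inf_comm, ← kerPlus]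
      exact hpk
    · exact closed_of_le hsub1 hpr hpc
  · refine ⟨?_, ?_, ?_⟩
    · rw [← kerPlus]; exact hpk
    · rw [range_orth Q hQ₁ hQ₂, ker_orth P hP₁ hP₂, inf_comm, ← kerMinus]
      exact hmk
    · exact closed_of_le hsub2 hmr hmc

end
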